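/- Suppose a finite set 𝒜 of pairwise disjoint open intervals in ℝ, each of length greater than a > 0, is given, and I ∈ 𝒜 is an interval of maximal length. Then the set 𝒟 = {D ∈ 𝒜 \ {I} : dist(I, D) ≤ a} has cardinality at most 2, and |I| ≥ (1/3)·(|I| + Σ_{D ∈ 𝒟} |D|). -/

import Mathlib

/-!
An interval of `𝒟` lies entirely to one side of `I`. Two intervals of length `> a` whose left
endpoints (or whose right endpoints) are at most `a` apart overlap, so disjointness allows at most
one member of `𝒟` to start in `[I.2, I.2 + a]` and at most one to end in `[I.1 - a, I.1]`.
Each has length at most `|I|`, whence `Σ_{D ∈ 𝒟} |D| ≤ 2 |I|`.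
-/

open Finset

lemma le_or_le_of_disjoint_Ioo {α : Type*} [LinearOrder α] [DenselyOrdered α] {a₁ a₂ b₁ b₂ : α}
    (ha : a₁ < a₂) (hb : b₁ < b₂) (h : Disjoint (Set.Ioo a₁ a₂) (Set.Ioo b₁ b₂)) :
    a₂ ≤ b₁ ∨ b₂ ≤ a₁ := by
  rw [Set.Ioo_disjoint_Ioo] at h
  rcases min_le_iff.1 h with h | h <;> rcases le_max_iff.1 h with h | h
  exacts [absurd h ha.not_ge, .inl h, .inr h, absurd h hb.not_ge]

lemma not_disjoint_Ioo_of_abs_sub_left_le {a a₁ a₂ b₁ b₂ : ℝ} (ha : a < a₂ - a₁)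
    (hb : a < b₂ - b₁) (h : |a₁ - b₁| ≤ a) : ¬Disjoint (Set.Ioo a₁ a₂) (Set.Ioo b₁ b₂) := by
  rw [Set.Ioo_disjoint_Ioo, not_le, max_lt_iff, lt_min_iff, lt_min_iff]
  rw [abs_le] at h
  refine ⟨⟨?_, ?_⟩, ?_, ?_⟩ <;> linarith

lemma not_disjoint_Ioo_of_abs_sub_right_le {a a₁ a₂ b₁ b₂ : ℝ} (ha : a < a₂ - a₁)
    (hb : a < b₂ - b₁) (h : |a₂ - b₂| ≤ a) : ¬Disjoint (Set.Ioo a₁ a₂) (Set.Ioo b₁ b₂) := by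
  rw [Set.Ioo_disjoint_Ioo, not_le, max_lt_iff, lt_min_iff, lt_min_iff]
  rw [abs_le] at h
  refine ⟨⟨?_, ?_⟩, ?_, ?_⟩ <;> linarith

section DisjointFamily

variable {a : ℝ} {𝒜 : Finset (ℝ × ℝ)} (hlen : ∀ p ∈ 𝒜, a < p.2 - p.1)
  (hdisj : ∀ p ∈ 𝒜, ∀ q ∈ 𝒜, p ≠ q → Disjoint (Set.Ioo p.1 p.2) (Set.Ioo q.1 q.2))
include hlen hdisj

lemma card_filter_fst_mem_Icc_le_one (c : ℝ) : #{p ∈ 𝒜 | p.1 ∈ Set.Icc c (c + a)} ≤ 1 := by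
  refine card_le_one.2 fun p hp q hq ↦ by_contra fun hpq ↦ ?_
  simp only [mem_filter, Set.mem_Icc] at hp hq
  refine not_disjoint_Ioo_of_abs_sub_left_le (hlen p hp.1) (hlen q hq.1) ?_
    (hdisj p hp.1 q hq.1 hpq)
  rw [abs_le]
  constructor <;> linarith

lemma card_filter_snd_mem_Icc_le_one (c : ℝ) : #{p ∈ 𝒜 | p.2 ∈ Set.Icc (c - a) c} ≤ 1 := by
  refine card_le_one.2 fun p hp q hq ↦ by_contra fun hpq ↦ ?_
  simp only [mem_filter, Set.mem_Icc] at hp hq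
  refine not_disjoint_Ioo_of_abs_sub_right_le (hlen p hp.1) (hlen q hq.1) ?_
    (hdisj p hp.1 q hq.1 hpq)
  rw [abs_le]
  constructor <;> linarith

lemma card_filter_gap_le_le_two (ha : 0 < a) {I : ℝ × ℝ} (hI : I ∈ 𝒜) :
    #{D ∈ 𝒜.erase I | max (D.1 - I.2) (I.1 - D.2) ≤ a} ≤ 2 := by
  have hsub : {D ∈ 𝒜.erase I | max (D.1 - I.2) (I.1 - D.2) ≤ a} ⊆
      {p ∈ 𝒜 | p.1 ∈ Set.Icc I.2 (I.2 + a)} ∪ {p ∈ 𝒜 | p.2 ∈ Set.Icc (I.1 - a) I.1} := by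
    intro D hD
    simp only [mem_filter, mem_erase, max_le_iff] at hD
    obtain ⟨⟨hDI, hD𝒜⟩, hright, hleft⟩ := hD
    have hpos : ∀ p ∈ 𝒜, p.1 < p.2 := fun p hp ↦ by linarith [hlen p hp]
    simp only [mem_union, mem_filter, Set.mem_Icc]
    rcases le_or_le_of_disjoint_Ioo (hpos I hI) (hpos D hD𝒜) (hdisj I hI D hD𝒜 (Ne.symm hDI))
      with h | h
    · exact .inl ⟨hD𝒜, h, by linarith⟩
    · exact .inr ⟨hD𝒜, by linarith, h⟩
  calc _ ≤ _ := card_le_card hsub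
    _ ≤ _ := card_union_le _ _
    _ ≤ 1 + 1 := add_le_add (card_filter_fst_mem_Icc_le_one hlen hdisj _)
      (card_filter_snd_mem_Icc_le_one hlen hdisj _)

end DisjointFamily

/-- Induction step of the lemma about segments: if `I ∈ 𝒜` has maximal length among
a finite family of pairwise disjoint open intervals of length `> a > 0`, then the set
`𝒟` of other members of `𝒜` at distance `≤ a` from `I` has at most 2 elements, and
`|I| ≥ (1/3)(|I| + Σ_{D ∈ 𝒟} |D|)`. The distance between disjoint open intervals
`(p₁,p₂)` and `(q₁,q₂)` is `max (q₁ - p₂) (p₁ - q₂)`. -/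
theorem stmt5 (a : ℝ) (ha : 0 < a) (𝒜 : Finset (ℝ × ℝ))
    (hlen : ∀ p ∈ 𝒜, a < p.2 - p.1)
    (hdisj : ∀ p ∈ 𝒜, ∀ q ∈ 𝒜, p ≠ q → Disjoint (Set.Ioo p.1 p.2) (Set.Ioo q.1 q.2))
    (I : ℝ × ℝ) (hI : I ∈ 𝒜) (hImax : ∀ p ∈ 𝒜, p.2 - p.1 ≤ I.2 - I.1)
    (𝒟 : Finset (ℝ × ℝ))
    (h𝒟 : 𝒟 = (𝒜.erase I).filter (fun D => max (D.1 - I.2) (I.1 - D.2) ≤ a)) :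
    𝒟.card ≤ 2 ∧ I.2 - I.1 ≥ (1 / 3) * ((I.2 - I.1) + ∑ D ∈ 𝒟, (D.2 - D.1)) := by
  have hcard : #𝒟 ≤ 2 := h𝒟 ▸ card_filter_gap_le_le_two hlen hdisj ha hI
  have hsum : ∑ D ∈ 𝒟, (D.2 - D.1) ≤ #𝒟 • (I.2 - I.1) :=
    sum_le_card_nsmul _ _ _ fun D hD ↦ hImax D (mem_of_mem_erase (mem_filter.1 (h𝒟 ▸ hD)).1)
  have hcard' : (#𝒟 : ℝ) ≤ 2 := by exact_mod_cast hcard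
  rw [nsmul_eq_mul] at hsum
  have hsum2 : ∑ D ∈ 𝒟, (D.2 - D.1) ≤ 2 * (I.2 - I.1) :=
    hsum.trans (mul_le_mul_of_nonneg_right hcard' (ha.trans (hlen I hI)).le)
  exact ⟨hcard, by linarith⟩
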